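/- For the autoregressive LLM causal model, the counterfactual output distribution under the simple semantics equals the observational output distribution at the counterfactual prompt: P*(Y* = y* | Y = y, X = x, X* = x*) = P(Y = y* | X = x*) for all outputs y*, y and prompts x* ≠ x. -/

import Mathlib

/-- A nondeterministic causal model: finite variables with finite domains,
an acyclic graph (witnessed by a rank function), and Markov-factorizing
conditional distributions `cond i v x = P(X_i = x | parents take values as in v)`. -/
structure NCM (ι : Type) [Fintype ι] [DecidableEq ι] (Val : ι → Type)
    [∀ i, Fintype (Val i)] [∀ i, DecidableEq (Val i)] where
  parents : ι → Finset ι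
  rank : ι → ℕ
  acyclic : ∀ i, ∀ j ∈ parents i, rank j < rank i
  cond : (i : ι) → ((j : ι) → Val j) → Val i → ℝ
  cond_nonneg : ∀ i v x, 0 ≤ cond i v x
  cond_sum : ∀ i v, ∑ x, cond i v x = 1
  cond_local : ∀ i v w, (∀ j ∈ parents i, v j = w j) → cond i v = cond i w

namespace NCM

variable {ι : Type} [Fintype ι] [DecidableEq ι] {Val : ι → Type}
  [∀ i, Fintype (Val i)] [∀ i, DecidableEq (Val i)]

/-- The root variables: those with no parents. -/
def rootSet (M : NCM ι Val) : Finset ι := Finset.univ.filter (fun i => M.parents i = ∅)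

/-- The non-root variables. -/
def nonrootSet (M : NCM ι Val) : Finset ι := Finset.univ.filter (fun i => M.parents i ≠ ∅)

/-- `P(V = v | R = roots of v)`: Markov product over the non-root variables. -/
def obsCond (M : NCM ι Val) (v : (j : ι) → Val j) : ℝ :=
  ∏ i ∈ M.nonrootSet, M.cond i v (v i)

/-- The observational conditional distribution `P(V = v | R = r)`. -/
def obs (M : NCM ι Val) (r v : (j : ι) → Val j) : ℝ :=
  if ∀ i ∈ M.rootSet, v i = r i then M.obsCond v else 0

/-- The updated conditional `P^v`: a point mass on the actual value when all parents
take their actual values, and unchanged otherwise. -/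
def condUpd (M : NCM ι Val) (vact : (j : ι) → Val j) (i : ι)
    (v : (j : ι) → Val j) (x : Val i) : ℝ :=
  if ∀ j ∈ M.parents i, v j = vact j then (if x = vact i then 1 else 0)
  else M.cond i v x

/-- `P^{vact}(V = v | R = roots of v)`: Markov product of the updated conditionals. -/
def updCond (M : NCM ι Val) (vact v : (j : ι) → Val j) : ℝ :=
  ∏ i ∈ M.nonrootSet, M.condUpd vact i v (v i)

/-- The counterfactual distribution `P*(V* = v | V = vact, R* = r) := P^{vact}(V = v | R = r)`. -/
def cf (M : NCM ι Val) (vact r v : (j : ι) → Val j) : ℝ :=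
  if ∀ i ∈ M.rootSet, v i = r i then M.updCond vact v else 0

/-- `M` satisfies the simple semantics: whenever the counterfactual root values differ
from the actual ones, counterfactual probabilities equal observational ones. -/
def simpleSemantics (M : NCM ι Val) : Prop :=
  ∀ vact r, (¬ ∀ i ∈ M.rootSet, r i = vact i) →
    ∀ v, M.cf vact r v = M.obs r v

end NCM

/-- The variables of the causal model of an LLM: the prompt `X`,
the tokens `T 0, ..., T (k-1)`, and the output `Y`. -/
inductive Var (k : ℕ) where
  | X : Var k
  | T : Fin k → Var k
  | Y : Var k
deriving DecidableEq, Fintype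

/-- The domains: the prompt is a sequence of `l` tokens from the vocabulary `Voc`,
each `T i` is a token, and the output is a sequence of `k` tokens. -/
def LVal (Voc : Type) (k l : ℕ) : Var k → Type
  | .X => Fin l → Voc
  | .T _ => Voc
  | .Y => Fin k → Voc

attribute [reducible] LVal

instance (Voc : Type) (k l : ℕ) [Fintype Voc] [DecidableEq Voc] :
    ∀ i : Var k, Fintype (LVal Voc k l i)
  | .X => inferInstanceAs (Fintype (Fin l → Voc))
  | .T _ => inferInstanceAs (Fintype Voc)
  | .Y => inferInstanceAs (Fintype (Fin k → Voc))

instance (Voc : Type) (k l : ℕ) [DecidableEq Voc] :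
    ∀ i : Var k, DecidableEq (LVal Voc k l i)
  | .X => inferInstanceAs (DecidableEq (Fin l → Voc))
  | .T _ => inferInstanceAs (DecidableEq Voc)
  | .Y => inferInstanceAs (DecidableEq (Fin k → Voc))

/-- For the autoregressive LLM causal model, the counterfactual output
distribution under the simple semantics equals the observational output distribution
at the counterfactual prompt:
`P*(Y* = y* | Y = y, X = x, X* = x*) = P(Y = y* | X = x*)` for all `y*` and `x* ≠ x`. -/
theorem stmt15 (k l : ℕ) (hl : 0 < l) (hlk : l < k)
    (Voc : Type) [Fintype Voc] [DecidableEq Voc]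
    (M : NCM (Var k) (LVal Voc k l))
    -- the prompt `X` is the (only) root variable
    (hX : M.parents Var.X = ∅)
    -- for `i < l`, the token `T i` is determined by the prompt: it is the `i`-th
    -- prompt token, i.e. `(T_1,...,T_l) = X`
    (hTlow : ∀ i : Fin k, (i : ℕ) < l → M.parents (Var.T i) = {Var.X})
    (hTlowDet : ∀ i : Fin k, ∀ h : (i : ℕ) < l,
      ∀ (v : (j : Var k) → LVal Voc k l j) (x : Voc),
        M.cond (Var.T i) v x = if x = v Var.X ⟨(i : ℕ), h⟩ then 1 else 0)
    -- for `i ≥ l`, the token `T i` has parents `T_1, ..., T_{i-1}`, with an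
    -- arbitrary conditional distribution `P(T_i | T_1, ..., T_{i-1})`
    (hThigh : ∀ i : Fin k, l ≤ (i : ℕ) →
      M.parents (Var.T i) = (Finset.univ.filter (fun j : Fin k => j < i)).image Var.T)
    -- the output `Y` deterministically equals `(T_1, ..., T_k)`
    (hYpar : M.parents Var.Y = Finset.univ.image Var.T)
    (hYdet : ∀ (v : (j : Var k) → LVal Voc k l j) (y : Fin k → Voc),
      M.cond Var.Y v y = if y = (fun j => v (Var.T j)) then 1 else 0)
    -- the factual valuation (a genuinely possible observation) with prompt `x = vact X`
    (vact : (j : Var k) → LVal Voc k l j) (hvact : 0 < M.obsCond vact)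
    -- the counterfactual prompt `x* ≠ x`
    (xstar : Fin l → Voc) (hx : xstar ≠ vact Var.X) :
    ∀ ystar : Fin k → Voc,
      ∑ vstar ∈ Finset.univ.filter
          (fun vstar : (j : Var k) → LVal Voc k l j => vstar Var.Y = ystar),
        M.cf vact (Function.update vact Var.X xstar) vstar
      = ∑ vstar ∈ Finset.univ.filter
          (fun vstar : (j : Var k) → LVal Voc k l j => vstar Var.Y = ystar),
        M.obs (Function.update vact Var.X xstar) vstar := by
  intro ystar
  apply Finset.sum_congr rfl
  intro vstar _
  set r := Function.update vact Var.X xstar with hr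
  have hXroot : Var.X ∈ M.rootSet := by
    simp [NCM.rootSet, hX]
  unfold NCM.cf NCM.obs
  by_cases hroot : ∀ i ∈ M.rootSet, vstar i = r i
  · rw [if_pos hroot, if_pos hroot]
    have hvX : vstar Var.X = xstar := by
      have := hroot Var.X hXroot
      simpa [hr, Function.update_self] using this
    obtain ⟨j0, hj0⟩ := Function.ne_iff.mp hx
    have hj0k : (j0 : ℕ) < k := lt_trans j0.2 hlk
    set j0' : Fin k := ⟨j0, hj0k⟩ with hj0'
    have hj0l : (j0' : ℕ) < l := j0.2
    have hTj0mem : Var.T j0' ∈ M.nonrootSet := by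
      simp [NCM.nonrootSet, hTlow j0' hj0l]
    have hvactT : vact (Var.T j0') = vact Var.X j0 := by
      by_contra hne
      have h0 : M.cond (Var.T j0') vact (vact (Var.T j0')) = 0 := by
        rw [hTlowDet j0' hj0l]
        have : (⟨((j0' : Fin k) : ℕ), hj0l⟩ : Fin l) = j0 := by
          simp [hj0']
        rw [this, if_neg hne]
      have : M.obsCond vact = 0 := Finset.prod_eq_zero hTj0mem h0
      linarith
    have hfin : (⟨((j0' : Fin k) : ℕ), hj0l⟩ : Fin l) = j0 := by
      simp [hj0']
    by_cases hB : vstar (Var.T j0') = xstar j0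
    · unfold NCM.updCond NCM.obsCond
      apply Finset.prod_congr rfl
      intro i hi
      have hne : ¬ ∀ j ∈ M.parents i, vstar j = vact j := by
        cases i with
        | X =>
          exfalso
          simp [NCM.nonrootSet, hX] at hi
        | T m =>
          by_cases hm : (m : ℕ) < l
          · intro h
            have := h Var.X (by simp [hTlow m hm])
            rw [hvX] at this
            exact hx this
          · intro h
            have hmem : Var.T j0' ∈ M.parents (Var.T m) := by
              rw [hThigh m (le_of_not_gt hm)]
              simp only [Finset.mem_image, Finset.mem_filter, Finset.mem_univ, true_and]
              exact ⟨j0', Fin.lt_def.mpr (lt_of_lt_of_le hj0l (le_of_not_gt hm)), rfl⟩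
            have := h _ hmem
            rw [hB, hvactT] at this
            exact hj0 this
        | Y =>
          intro h
          have hmem : Var.T j0' ∈ M.parents Var.Y := by
            rw [hYpar]
            exact Finset.mem_image_of_mem _ (Finset.mem_univ _)
          have := h _ hmem
          rw [hB, hvactT] at this
          exact hj0 this
      unfold NCM.condUpd
      rw [if_neg hne]
    · have hXne : ¬ ∀ j ∈ M.parents (Var.T j0'), vstar j = vact j := by
        intro h
        have := h Var.X (by simp [hTlow j0' hj0l])
        rw [hvX] at this
        exact hx this
      have hzero2 : M.cond (Var.T j0') vstar (vstar (Var.T j0')) = 0 := by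
        rw [hTlowDet j0' hj0l, hfin, hvX, if_neg hB]
      have hzero1 : M.condUpd vact (Var.T j0') vstar (vstar (Var.T j0')) = 0 := by
        unfold NCM.condUpd
        rw [if_neg hXne]
        exact hzero2
      unfold NCM.updCond NCM.obsCond
      rw [Finset.prod_eq_zero hTj0mem hzero1, Finset.prod_eq_zero hTj0mem hzero2]
  · rw [if_neg hroot, if_neg hroot]
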